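/- There exists an intersecting 4-family with exactly 9 blocks and transversal size 4, and every intersecting 4-family of transversal size 4 has at least 9 blocks; that is, q(4) = 9. -/
import Mathlib


/-- `C` covers the family `F` if it meets every block of `F`. -/
def Covers (C : Finset ℕ) (F : Finset (Finset ℕ)) : Prop :=
  ∀ B ∈ F, (C ∩ B).Nonempty

/-- A family is intersecting if any two of its blocks meet. -/
def IsIntersecting (F : Finset (Finset ℕ)) : Prop :=
  ∀ A ∈ F, ∀ B ∈ F, (A ∩ B).Nonempty

/-- The degree of a vertex `x` in `F`: the number of blocks containing `x`. -/
def deg (F : Finset (Finset ℕ)) (x : ℕ) : ℕ :=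
  (F.filter (fun B => x ∈ B)).card

/-- The vertex set of a family: the union of its blocks. -/
def vertexSet (F : Finset (Finset ℕ)) : Finset ℕ :=
  F.sup id

/-- `F` has transversal size `t`: some `t`-set covers `F`, and no smaller set does. -/
def HasTransversalSize (F : Finset (Finset ℕ)) (t : ℕ) : Prop :=
  (∃ C : Finset ℕ, Covers C F ∧ C.card = t) ∧
  ∀ C : Finset ℕ, Covers C F → t ≤ C.card

open Finset

lemma covers_mono {C C' : Finset ℕ} {F : Finset (Finset ℕ)} (h : Covers C F) (hsub : C ⊆ C') :
    Covers C' F := by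
  intro B hB
  obtain ⟨x, hx⟩ := h B hB
  simp only [mem_inter] at hx
  exact ⟨x, mem_inter.2 ⟨hsub hx.1, hx.2⟩⟩

/-- Any intersecting family of nonempty sets has a cover of size at most half (rounded up). -/
lemma exists_half_cover : ∀ (n : ℕ) (H : Finset (Finset ℕ)), H.card ≤ n →
    (∀ B ∈ H, B.Nonempty) → (∀ A ∈ H, ∀ B ∈ H, (A ∩ B).Nonempty) →
    ∃ C : Finset ℕ, Covers C H ∧ 2 * C.card ≤ H.card + 1 := by
  intro n
  induction n with
  | zero =>
    intro H hcard _ _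
    have : H = ∅ := card_eq_zero.1 (Nat.le_zero.1 hcard)
    exact ⟨∅, by intro B hB; simp [this] at hB, by simp⟩
  | succ n ih =>
    intro H hcard hne hint
    rcases H.eq_empty_or_nonempty with rfl | ⟨B1, hB1⟩
    · exact ⟨∅, by intro B hB; simp at hB, by simp⟩
    rcases (H.erase B1).eq_empty_or_nonempty with he | ⟨B2, hB2⟩
    · -- H = {B1}
      obtain ⟨p, hp⟩ := hne B1 hB1
      refine ⟨{p}, ?_, ?_⟩
      · intro B hB
        have : B = B1 := by
          by_contra hne'
          exact absurd (mem_erase.2 ⟨hne', hB⟩) (by simp [he])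
        subst this
        exact ⟨p, by simp [hp]⟩
      · have : 1 ≤ H.card := card_pos.2 ⟨B1, hB1⟩
        simpa using Nat.succ_le_succ this
    · have hB2H : B2 ∈ H := mem_of_mem_erase hB2
      have hne12 : B2 ≠ B1 := ne_of_mem_erase hB2
      obtain ⟨p, hp⟩ := hint B1 hB1 B2 hB2H
      simp only [mem_inter] at hp
      set H' := (H.erase B1).erase B2 with hH'
      have hsub' : H' ⊆ H := fun B hB =>
        mem_of_mem_erase (mem_of_mem_erase hB)
      have hcard' : H'.card + 2 = H.card := by
        have h1 : (H.erase B1).card + 1 = H.card := card_erase_add_one hB1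
        have h2 : H'.card + 1 = (H.erase B1).card := card_erase_add_one hB2
        omega
      obtain ⟨C', hC', hC'card⟩ := ih H' (by omega)
        (fun B hB => hne B (hsub' hB)) (fun A hA B hB => hint A (hsub' hA) B (hsub' hB))
      refine ⟨insert p C', ?_, ?_⟩
      · intro B hB
        by_cases h1 : B = B1
        · exact ⟨p, mem_inter.2 ⟨mem_insert_self _ _, h1 ▸ hp.1⟩⟩
        by_cases h2 : B = B2
        · exact ⟨p, mem_inter.2 ⟨mem_insert_self _ _, h2 ▸ hp.2⟩⟩
        · have hBH' : B ∈ H' := mem_erase.2 ⟨h2, mem_erase.2 ⟨h1, hB⟩⟩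
          obtain ⟨x, hx⟩ := hC' B hBH'
          simp only [mem_inter] at hx
          exact ⟨x, mem_inter.2 ⟨mem_insert_of_mem hx.1, hx.2⟩⟩
      · have := card_insert_le p C'
        omega

/-- If no 3-set covers `F`, then for every `T` many blocks avoid `T`. -/
lemma avoid_card {F : Finset (Finset ℕ)} (h4 : ∀ B ∈ F, B.card = 4)
    (hint : IsIntersecting F) (hno : ∀ C, Covers C F → 4 ≤ C.card) (T : Finset ℕ) :
    7 ≤ (F.filter fun B => B ∩ T = ∅).card + 2 * T.card := by
  set H := F.filter fun B => B ∩ T = ∅ with hHdef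
  have hsub : H ⊆ F := filter_subset _ _
  obtain ⟨C, hC, hCcard⟩ := exists_half_cover H.card H le_rfl
    (fun B hB => card_pos.1 (by rw [h4 B (hsub hB)]; norm_num))
    (fun A hA B hB => hint A (hsub hA) B (hsub hB))
  have hcov : Covers (C ∪ T) F := by
    intro B hB
    by_cases hBT : B ∩ T = ∅
    · obtain ⟨x, hx⟩ := hC B (mem_filter.2 ⟨hB, hBT⟩)
      simp only [mem_inter] at hx
      exact ⟨x, mem_inter.2 ⟨mem_union_left _ hx.1, hx.2⟩⟩
    · obtain ⟨x, hx⟩ := nonempty_iff_ne_empty.2 hBT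
      simp only [mem_inter] at hx
      exact ⟨x, mem_inter.2 ⟨mem_union_right _ hx.2, hx.1⟩⟩
  have h4le := hno _ hcov
  have := card_union_le C T
  omega

/-- The key pigeonhole endgame: if some `x` has exactly `5` blocks avoiding it, and some
`v ≠ x` is in exactly one block avoiding `x`, then a 3-cover exists: contradiction. -/
lemma endgame {F : Finset (Finset ℕ)} (h4 : ∀ B ∈ F, B.card = 4)
    (hint : IsIntersecting F) (hno : ∀ C, Covers C F → 4 ≤ C.card)
    {x v : ℕ}
    (hH5 : (F.filter fun B => x ∉ B).card = 5)
    (hG1 : (F.filter fun B => v ∈ B ∧ x ∉ B).card = 1) : False := by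
  set H := F.filter fun B => x ∉ B with hHdef
  set G := F.filter fun B => v ∈ B ∧ x ∉ B with hGdef
  obtain ⟨D, hD⟩ := card_eq_one.1 hG1
  have hDG : D ∈ G := by rw [hD]; exact mem_singleton_self D
  rw [hGdef, mem_filter] at hDG
  obtain ⟨hDF, hvD, hxD⟩ := hDG
  have hDH : D ∈ H := mem_filter.2 ⟨hDF, hxD⟩
  set A := H.erase D with hAdef
  have hH5' : H.card = 5 := hH5
  have hAcard : A.card = 4 := by
    have h1 : A.card + 1 = H.card := card_erase_add_one hDH
    omega
  have hAH : ∀ B ∈ A, B ∈ H := fun B hB => mem_of_mem_erase hB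
  have hAF : ∀ B ∈ A, B ∈ F := fun B hB => mem_of_mem_filter _ (hAH B hB)
  have hAx : ∀ B ∈ A, x ∉ B := fun B hB => (mem_filter.1 (hAH B hB)).2
  have hAv : ∀ B ∈ A, v ∉ B := by
    intro B hB hvB
    have : B ∈ G := mem_filter.2 ⟨hAF B hB, hvB, hAx B hB⟩
    rw [hD, mem_singleton] at this
    exact (ne_of_mem_erase hB) this
  have hDvcard : (D.erase v).card = 3 := by
    have := card_erase_add_one hvD
    have := h4 D hDF
    omega
  -- each block of A meets D \ {v}
  have hmeet : ∀ B ∈ A, (B ∩ D.erase v).Nonempty := by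
    intro B hB
    obtain ⟨z, hz⟩ := hint B (hAF B hB) D hDF
    simp only [mem_inter] at hz
    refine ⟨z, mem_inter.2 ⟨hz.1, mem_erase.2 ⟨?_, hz.2⟩⟩⟩
    rintro rfl
    exact hAv B hB hz.1
  classical
  set f : Finset ℕ → ℕ := fun B => if h : (B ∩ D.erase v).Nonempty then h.choose else 0 with hf
  have hfmem : ∀ B ∈ A, f B ∈ B ∩ D.erase v := by
    intro B hB
    have h := hmeet B hB
    simp only [hf, dif_pos h]
    exact h.choose_spec
  have hmaps : ∀ B ∈ A, f B ∈ D.erase v := fun B hB => (mem_inter.1 (hfmem B hB)).2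
  obtain ⟨X, hX, Y, hY, hXY, hfXY⟩ :=
    exists_ne_map_eq_of_card_lt_of_maps_to (by rw [hDvcard, hAcard]; norm_num) hmaps
  set p := f X with hp
  have hpX : p ∈ X := (mem_inter.1 (hfmem X hX)).1
  have hpY : p ∈ Y := hfXY ▸ (mem_inter.1 (hfmem Y hY)).1
  have hpD : p ∈ D := mem_of_mem_erase (mem_inter.1 (hfmem X hX)).2
  set R := (A.erase X).erase Y with hR
  have hYAX : Y ∈ A.erase X := mem_erase.2 ⟨fun h => hXY (h.symm), hY⟩
  have hRcard : R.card = 2 := by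
    have h1 : (A.erase X).card + 1 = A.card := card_erase_add_one hX
    have h2 : R.card + 1 = (A.erase X).card := card_erase_add_one hYAX
    omega
  obtain ⟨Z, W, hZW, hRZW⟩ := card_eq_two.1 hRcard
  have hZR : Z ∈ R := by rw [hRZW]; simp
  have hWR : W ∈ R := by rw [hRZW]; simp
  have hRA : ∀ B ∈ R, B ∈ A := fun B hB => mem_of_mem_erase (mem_of_mem_erase hB)
  obtain ⟨q, hq⟩ := hint Z (hAF Z (hRA Z hZR)) W (hAF W (hRA W hWR))
  simp only [mem_inter] at hq
  -- {x, p, q} covers F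
  have hcov : Covers {x, p, q} F := by
    intro B hB
    by_cases hxB : x ∈ B
    · exact ⟨x, mem_inter.2 ⟨by simp, hxB⟩⟩
    have hBH : B ∈ H := mem_filter.2 ⟨hB, hxB⟩
    by_cases hBD : B = D
    · exact ⟨p, mem_inter.2 ⟨by simp, hBD ▸ hpD⟩⟩
    have hBA : B ∈ A := mem_erase.2 ⟨hBD, hBH⟩
    by_cases hBX : B = X
    · exact ⟨p, mem_inter.2 ⟨by simp, hBX ▸ hpX⟩⟩
    by_cases hBY : B = Y
    · exact ⟨p, mem_inter.2 ⟨by simp, hBY ▸ hpY⟩⟩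
    have hBR : B ∈ R := mem_erase.2 ⟨hBY, mem_erase.2 ⟨hBX, hBA⟩⟩
    rw [hRZW, mem_insert, mem_singleton] at hBR
    rcases hBR with rfl | rfl
    · exact ⟨q, mem_inter.2 ⟨by simp, hq.1⟩⟩
    · exact ⟨q, mem_inter.2 ⟨by simp, hq.2⟩⟩
  have := hno _ hcov
  have hc3 : ({x, p, q} : Finset ℕ).card ≤ 3 := by
    apply le_trans (card_insert_le _ _)
    have := card_insert_le p ({q} : Finset ℕ)
    simp at this ⊢
    omega
  omega

/-- The lower bound: every intersecting 4-uniform family of transversal size 4 has ≥ 9 blocks. -/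
lemma lower_bound (F : Finset (Finset ℕ)) (h4 : ∀ B ∈ F, B.card = 4)
    (hint : IsIntersecting F) (ht : HasTransversalSize F 4) : 9 ≤ F.card := by
  classical
  obtain ⟨-, hno⟩ := ht
  by_contra hcon
  push_neg at hcon
  have hm : F.card ≤ 8 := by omega
  -- F is nonempty
  obtain ⟨B0, hB0⟩ : F.Nonempty := by
    rcases F.eq_empty_or_nonempty with rfl | h
    · have : Covers ∅ (∅ : Finset (Finset ℕ)) := fun B hB => by simp at hB
      have := hno ∅ this
      simp at this
    · exact h
  have hB04 : B0.card = 4 := h4 B0 hB0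
  set a : ℕ → ℕ := fun x => (F.filter fun B => x ∉ B).card with ha
  have ha5 : ∀ x, 5 ≤ a x := by
    intro x
    have h := avoid_card h4 hint hno {x}
    have heq : (F.filter fun B => B ∩ ({x} : Finset ℕ) = ∅) = F.filter fun B => x ∉ B := by
      apply filter_congr
      intro B _
      simp [eq_empty_iff_forall_notMem]
    rw [heq] at h
    simp only [card_singleton] at h
    show 5 ≤ (F.filter fun B => x ∉ B).card
    omega
  -- t B = |B0 ∩ B|
  set t : Finset ℕ → ℕ := fun B => (B0 ∩ B).card with htdef
  have ht1 : ∀ B ∈ F, 1 ≤ t B := fun B hB => card_pos.2 (hint B0 hB0 B hB)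
  have htB0 : t B0 = 4 := by simp [htdef, hB04]
  -- key identity : ∑_{x ∈ B0} a x + ∑_{B ∈ F} t B = 4 * F.card
  have hkey : ∑ x ∈ B0, a x + ∑ B ∈ F, t B = 4 * F.card := by
    have h1 : ∑ x ∈ B0, a x = ∑ B ∈ F, (B0 \ B).card := by
      have : ∀ x ∈ B0, a x = ∑ B ∈ F, if x ∉ B then 1 else 0 := by
        intro x _
        rw [ha]
        exact card_filter _ _
      rw [sum_congr rfl this, sum_comm]
      apply sum_congr rfl
      intro B _
      rw [sdiff_eq_filter, card_filter]
    rw [h1, ← sum_add_distrib]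
    have : ∀ B ∈ F, (B0 \ B).card + t B = 4 := by
      intro B _
      show (B0 \ B).card + (B0 ∩ B).card = 4
      have := card_sdiff_add_card_inter B0 B
      omega
    rw [sum_congr rfl this]
    simp [mul_comm]
  have hSa : 20 ≤ ∑ x ∈ B0, a x := by
    calc 20 = B0.card * 5 := by rw [hB04]
    _ = B0.card • 5 := by simp
    _ ≤ ∑ x ∈ B0, a x := card_nsmul_le_sum B0 a 5 (fun x _ => ha5 x)
  have hsplit : t B0 + ∑ B ∈ F.erase B0, t B = ∑ B ∈ F, t B := add_sum_erase F t hB0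
  have hSt' : (F.erase B0).card ≤ ∑ B ∈ F.erase B0, t B := by
    calc (F.erase B0).card = (F.erase B0).card • 1 := by simp
    _ ≤ ∑ B ∈ F.erase B0, t B :=
      card_nsmul_le_sum _ t 1 (fun B hB => ht1 B (mem_of_mem_erase hB))
  have hec : (F.erase B0).card + 1 = F.card := card_erase_add_one hB0
  -- F.card = 8 and two cases
  have hm8 : F.card = 8 := by omega
  have hcases : (∑ x ∈ B0, a x = 20 ∧ ∑ B ∈ F.erase B0, t B = 8) ∨
      (∑ x ∈ B0, a x = 21 ∧ ∑ B ∈ F.erase B0, t B = 7) := by omega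
  -- helper : blocks with trace exactly {z}
  have traceD : ∀ z ∈ B0, ∃ D ∈ F, z ∈ D ∧ D ∩ B0 = {z} := by
    intro z hz
    have h := avoid_card h4 hint hno (B0.erase z)
    have hTcard : (B0.erase z).card = 3 := by
      have := card_erase_add_one hz
      omega
    rw [hTcard] at h
    have : 1 ≤ (F.filter fun B => B ∩ B0.erase z = ∅).card := by omega
    obtain ⟨D, hD⟩ := card_pos.1 this
    rw [mem_filter] at hD
    obtain ⟨hDF, hDe⟩ := hD
    have hsub : D ∩ B0 ⊆ {z} := by
      intro w hw
      rw [mem_inter] at hw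
      rw [mem_singleton]
      by_contra hwz
      have : w ∈ D ∩ B0.erase z := mem_inter.2 ⟨hw.1, mem_erase.2 ⟨hwz, hw.2⟩⟩
      rw [hDe] at this
      simp at this
    have hne : (D ∩ B0).Nonempty := by
      obtain ⟨w, hw⟩ := hint D hDF B0 hB0
      exact ⟨w, hw⟩
    have heq : D ∩ B0 = {z} := by
      obtain ⟨w, hw⟩ := hne
      have := hsub hw
      rw [mem_singleton] at this
      subst this
      apply Subset.antisymm hsub
      intro u hu
      rw [mem_singleton] at hu
      subst hu
      exact hw
    refine ⟨D, hDF, ?_, heq⟩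
    have : z ∈ D ∩ B0 := by rw [heq]; exact mem_singleton_self z
    exact (mem_inter.1 this).1
  -- a x + deg x = 8
  have hdeg : ∀ z : ℕ, (F.filter fun B => z ∈ B).card + a z = 8 := by
    intro z
    show (F.filter fun B => z ∈ B).card + (F.filter fun B => z ∉ B).card = 8
    have h1 := card_filter_add_card_filter_not (s := F) (p := fun B => z ∈ B)
    have h2 : (F.filter fun B => ¬ z ∈ B) = F.filter fun B => z ∉ B :=
      filter_congr (fun B _ => by simp)
    rw [h2] at h1
    omega
  rcases hcases with ⟨hSa20, hSt8⟩ | ⟨hSa21, hSt7⟩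
  · -- Case Sa = 20: all a x = 5, one block E with trace size 2
    have haall : ∀ x ∈ B0, a x = 5 := by
      have h20 : ∑ _x ∈ B0, (5:ℕ) = ∑ x ∈ B0, a x := by
        rw [hSa20, sum_const, hB04]
        norm_num
      have h := (sum_eq_sum_iff_of_le (s := B0) (f := fun _ => (5:ℕ)) (g := a)
        (fun x _ => ha5 x)).1 h20
      intro x hx
      exact (h x hx).symm
    -- exists E in erase with t E ≥ 2
    obtain ⟨E, hE, hE2⟩ : ∃ E ∈ F.erase B0, 2 ≤ t E := by
      by_contra hcon2
      push_neg at hcon2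
      have : ∀ B ∈ F.erase B0, t B = 1 := by
        intro B hB
        have := ht1 B (mem_of_mem_erase hB)
        have := hcon2 B hB
        omega
      rw [sum_congr rfl this] at hSt8
      simp at hSt8
      omega
    have hEF : E ∈ F := mem_of_mem_erase hE
    have hEB0 : E ≠ B0 := ne_of_mem_erase hE
    -- remaining blocks all have t = 1, and t E = 2
    have hrest : ∑ B ∈ (F.erase B0).erase E, t B + t E = 8 := by
      have := add_sum_erase (F.erase B0) t hE
      omega
    have hcard2 : ((F.erase B0).erase E).card = 6 := by
      have := card_erase_add_one hE
      omega
    have hrest6 : 6 ≤ ∑ B ∈ (F.erase B0).erase E, t B := by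
      calc (6 : ℕ) = ((F.erase B0).erase E).card • 1 := by rw [hcard2]; simp
      _ ≤ _ := card_nsmul_le_sum _ t 1
        (fun B hB => ht1 B (mem_of_mem_erase (mem_of_mem_erase hB)))
    have htE : t E = 2 := by omega
    -- B0 ∩ E = {y, z}
    obtain ⟨y, z, hyz, hyzeq⟩ := card_eq_two.1 htE
    have hyB0 : y ∈ B0 ∧ y ∈ E := by
      have : y ∈ B0 ∩ E := by rw [hyzeq]; simp
      exact ⟨(mem_inter.1 this).1, (mem_inter.1 this).2⟩
    have hzB0 : z ∈ B0 ∧ z ∈ E := by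
      have : z ∈ B0 ∩ E := by rw [hyzeq]; simp
      exact ⟨(mem_inter.1 this).1, (mem_inter.1 this).2⟩
    -- the trace-{z} block
    obtain ⟨D, hDF, hzD, hDtr⟩ := traceD z hzB0.1
    have hyD : y ∉ D := by
      intro hyD
      have : y ∈ D ∩ B0 := mem_inter.2 ⟨hyD, hyB0.1⟩
      rw [hDtr, mem_singleton] at this
      exact hyz this
    -- count the blocks containing z
    have hdegz : (F.filter fun B => z ∈ B).card = 3 := by
      have := hdeg z
      have := haall z hzB0.1
      omega
    -- G := blocks containing z not containing y
    set G := F.filter fun B => z ∈ B ∧ y ∉ B with hGd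
    have hDG : D ∈ G := mem_filter.2 ⟨hDF, hzD, hyD⟩
    have hGsub : G ⊆ ((F.filter fun B => z ∈ B).erase B0).erase E := by
      intro B hB
      rw [hGd, mem_filter] at hB
      refine mem_erase.2 ⟨?_, mem_erase.2 ⟨?_, mem_filter.2 ⟨hB.1, hB.2.1⟩⟩⟩
      · rintro rfl; exact hB.2.2 hyB0.2
      · rintro rfl; exact hB.2.2 hyB0.1
    have hB0z : B0 ∈ F.filter fun B => z ∈ B := mem_filter.2 ⟨hB0, hzB0.1⟩
    have hEz : E ∈ (F.filter fun B => z ∈ B).erase B0 :=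
      mem_erase.2 ⟨hEB0, mem_filter.2 ⟨hEF, hzB0.2⟩⟩
    have hGcard : G.card = 1 := by
      have hle : G.card ≤ 1 := by
        have h1 := card_erase_add_one hB0z
        have h2 := card_erase_add_one hEz
        have := card_le_card hGsub
        omega
      have hge : 1 ≤ G.card := card_pos.2 ⟨D, hDG⟩
      omega
    exact endgame h4 hint hno (haall y hyB0.1) hGcard
  · -- Case Sa = 21: all traces 1, one vertex v with a v = 6
    have hall1 : ∀ B ∈ F.erase B0, t B = 1 := by
      have h7 : ∑ _B ∈ F.erase B0, (1:ℕ) = ∑ B ∈ F.erase B0, t B := by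
        rw [hSt7, sum_const]
        simp only [smul_eq_mul, mul_one]
        omega
      have h := (sum_eq_sum_iff_of_le (s := F.erase B0) (f := fun _ => (1:ℕ)) (g := t)
        (fun B hB => ht1 B (mem_of_mem_erase hB))).1 h7
      intro B hB
      exact (h B hB).symm
    -- find v with a v = 6
    obtain ⟨v, hvB0, hv6⟩ : ∃ v ∈ B0, 6 ≤ a v := by
      by_contra hcon2
      push_neg at hcon2
      have : ∀ x ∈ B0, a x = 5 := by
        intro x hx
        have := ha5 x
        have := hcon2 x hx
        omega
      rw [sum_congr rfl this] at hSa21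
      rw [sum_const, hB04, smul_eq_mul] at hSa21
      omega
    have hrest15 : 15 ≤ ∑ x ∈ B0.erase v, a x := by
      have hce : (B0.erase v).card = 3 := by
        have := card_erase_add_one hvB0
        omega
      calc (15 : ℕ) = (B0.erase v).card • 5 := by rw [hce]; norm_num
      _ ≤ _ := card_nsmul_le_sum _ a 5 (fun x _ => ha5 x)
    have hsum_v : a v + ∑ x ∈ B0.erase v, a x = 21 := by
      have := add_sum_erase B0 a hvB0
      omega
    have hav : a v = 6 := by omega
    have hothers : ∀ x ∈ B0.erase v, a x = 5 := by
      have hce : (B0.erase v).card = 3 := by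
        have := card_erase_add_one hvB0
        omega
      have h15 : ∑ _x ∈ B0.erase v, (5:ℕ) = ∑ x ∈ B0.erase v, a x := by
        rw [sum_const, hce]
        simp only [smul_eq_mul]
        omega
      have h := (sum_eq_sum_iff_of_le (s := B0.erase v) (f := fun _ => (5:ℕ)) (g := a)
        (fun x _ => ha5 x)).1 h15
      intro x hx
      exact (h x hx).symm
    -- pick x ∈ B0.erase v
    obtain ⟨x, hx⟩ : (B0.erase v).Nonempty := by
      apply card_pos.1
      have := card_erase_add_one hvB0
      omega
    have hxv : x ≠ v := ne_of_mem_erase hx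
    have hxB0 : x ∈ B0 := mem_of_mem_erase hx
    -- the trace-{v} block
    obtain ⟨D, hDF, hvD, hDtr⟩ := traceD v hvB0
    have hxD : x ∉ D := by
      intro hxD
      have : x ∈ D ∩ B0 := mem_inter.2 ⟨hxD, hxB0⟩
      rw [hDtr, mem_singleton] at this
      exact hxv this
    have hdegv : (F.filter fun B => v ∈ B).card = 2 := by
      have := hdeg v
      omega
    set G := F.filter fun B => v ∈ B ∧ x ∉ B with hGd
    have hDG : D ∈ G := mem_filter.2 ⟨hDF, hvD, hxD⟩
    have hB0v : B0 ∈ F.filter fun B => v ∈ B := mem_filter.2 ⟨hB0, hvB0⟩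
    have hGsub : G ⊆ (F.filter fun B => v ∈ B).erase B0 := by
      intro B hB
      rw [hGd, mem_filter] at hB
      refine mem_erase.2 ⟨?_, mem_filter.2 ⟨hB.1, hB.2.1⟩⟩
      rintro rfl
      exact hB.2.2 hxB0
    have hGcard : G.card = 1 := by
      have hle : G.card ≤ 1 := by
        have h1 := card_erase_add_one hB0v
        have := card_le_card hGsub
        omega
      have hge : 1 ≤ G.card := card_pos.2 ⟨D, hDG⟩
      omega
    exact endgame h4 hint hno (hothers x hx) hGcard

/-- The explicit extremal family. -/
def exF : Finset (Finset ℕ) :=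
  { {1,2,3,10}, {4,5,6,10}, {7,8,9,10}, {1,4,7,11}, {2,5,8,11}, {3,6,9,11},
    {1,2,6,9}, {1,3,5,8}, {2,3,4,7} }

def exV : Finset ℕ := {1,2,3,4,5,6,7,8,9,10,11}

set_option maxRecDepth 100000 in
lemma exF_no_small_cover : ∀ C, Covers C exF → 4 ≤ C.card := by
  intro C hC
  by_contra hlt
  push_neg at hlt
  have hsubV : ∀ B ∈ exF, B ⊆ exV := by decide
  have hC' : Covers (C ∩ exV) exF := by
    intro B hB
    obtain ⟨w, hw⟩ := hC B hB
    simp only [Finset.mem_inter] at hw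
    exact ⟨w, Finset.mem_inter.2 ⟨Finset.mem_inter.2 ⟨hw.1, hsubV B hB hw.2⟩, hw.2⟩⟩
  have hcard' : (C ∩ exV).card ≤ 3 := by
    have := Finset.card_le_card (Finset.inter_subset_left : C ∩ exV ⊆ C)
    omega
  obtain ⟨C'', hsub1, hsub2, hcard''⟩ :=
    Finset.exists_subsuperset_card_eq (Finset.inter_subset_right : C ∩ exV ⊆ exV)
      hcard' (show (3:ℕ) ≤ exV.card by decide)
  have hC'' : Covers C'' exF := covers_mono hC' hsub1
  have hmem : C'' ∈ exV.powersetCard 3 := Finset.mem_powersetCard.2 ⟨hsub2, hcard''⟩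
  have hkill : ∀ C ∈ exV.powersetCard 3, ∃ B ∈ exF, C ∩ B = ∅ := by decide
  obtain ⟨B, hB, hBe⟩ := hkill C'' hmem
  obtain ⟨w, hw⟩ := hC'' B hB
  rw [hBe] at hw
  simp at hw

/-- `q(4) = 9`: there is an intersecting `4`-family with `9` blocks and
transversal size `4`, and every intersecting `4`-family of transversal size `4` has at
least `9` blocks. -/
theorem q_four_eq_nine :
    (∃ F : Finset (Finset ℕ), (∀ B ∈ F, B.card = 4) ∧ IsIntersecting F ∧
      F.card = 9 ∧ HasTransversalSize F 4) ∧
    (∀ F : Finset (Finset ℕ), (∀ B ∈ F, B.card = 4) → IsIntersecting F →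
      HasTransversalSize F 4 → 9 ≤ F.card) := by
  constructor
  · refine ⟨exF, by decide, by unfold IsIntersecting; decide, by decide,
      ⟨⟨{1,2,3,10}, by unfold Covers; decide, by decide⟩, exF_no_small_cover⟩⟩
  · intro F h4 hint ht
    exact lower_bound F h4 hint ht
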